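/- For the quantum solid torus P = O(D_p ×_θ S¹) with H = ℂ[u,u⁻¹]-coaction ρ(x) = x⊗1, ρ(h) = h⊗u, the map γ : H → P, uⁿ ↦ hⁿ, is a cleaving map: it is right H-colinear and convolution invertible with inverse uⁿ ↦ h⁻ⁿ, and the canonical map can : P ⊗_B P → P ⊗ H, p ⊗_B p' ↦ p p'₍₀₎ ⊗ p'₍₁₎, where B = P^{co H} ≅ O(D_p), is bijective. -/

import Mathlib

/-!
The coaction makes `P` a `ℤ`-graded algebra with `Pₙ = {a | ρ a = a ⊗ uⁿ}`: the generators are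
homogeneous and degrees add under multiplication, so `P = ⨆ Pₙ`. The unitary `h` has degree 1,
hence `hⁿ ∈ Pₙ`, which gives colinearity of `γ`, and `a ⊗ uⁿ ↦ a h⁻ⁿ ⊗_B hⁿ` inverts `can`:
for `b ∈ Pₙ` the element `b h⁻ⁿ` lies in `B = P₀`, so it moves across `⊗_B` and
`a b h⁻ⁿ ⊗_B hⁿ = a ⊗_B b`.
-/

open scoped TensorProduct

/-- Defining relations of the quantum solid torus `O(D_p ×_θ S¹)`.
Generators: `0 = x`, `1 = x*`, `2 = h`, `3 = h⁻¹ = h*`. -/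
inductive SolidTorusRel (p θ : ℝ) : FreeAlgebra ℂ (Fin 4) → FreeAlgebra ℂ (Fin 4) → Prop
  | h_hs : SolidTorusRel p θ (FreeAlgebra.ι ℂ 2 * FreeAlgebra.ι ℂ 3) 1
  | hs_h : SolidTorusRel p θ (FreeAlgebra.ι ℂ 3 * FreeAlgebra.ι ℂ 2) 1
  | disc : SolidTorusRel p θ (FreeAlgebra.ι ℂ 1 * FreeAlgebra.ι ℂ 0)
      ((p : ℂ) • (FreeAlgebra.ι ℂ 0 * FreeAlgebra.ι ℂ 1) +
        algebraMap ℂ (FreeAlgebra ℂ (Fin 4)) (1 - (p : ℝ)))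
  | h_x : SolidTorusRel p θ (FreeAlgebra.ι ℂ 2 * FreeAlgebra.ι ℂ 0)
      (Complex.exp (θ * Complex.I) • (FreeAlgebra.ι ℂ 0 * FreeAlgebra.ι ℂ 2))
  | h_xs : SolidTorusRel p θ (FreeAlgebra.ι ℂ 2 * FreeAlgebra.ι ℂ 1)
      (Complex.exp (-(θ * Complex.I)) • (FreeAlgebra.ι ℂ 1 * FreeAlgebra.ι ℂ 2))

/-- The coordinate algebra of the quantum solid torus. -/
def SolidTorus (p θ : ℝ) := RingQuot (SolidTorusRel p θ)

noncomputable instance (p θ : ℝ) : Ring (SolidTorus p θ) :=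
  inferInstanceAs (Ring (RingQuot (SolidTorusRel p θ)))
noncomputable instance (p θ : ℝ) : Algebra ℂ (SolidTorus p θ) :=
  inferInstanceAs (Algebra ℂ (RingQuot (SolidTorusRel p θ)))

noncomputable def stX (p θ : ℝ) : SolidTorus p θ :=
  RingQuot.mkAlgHom ℂ (SolidTorusRel p θ) (FreeAlgebra.ι ℂ 0)
noncomputable def stXs (p θ : ℝ) : SolidTorus p θ :=
  RingQuot.mkAlgHom ℂ (SolidTorusRel p θ) (FreeAlgebra.ι ℂ 1)
noncomputable def stH (p θ : ℝ) : SolidTorus p θ :=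
  RingQuot.mkAlgHom ℂ (SolidTorusRel p θ) (FreeAlgebra.ι ℂ 2)
noncomputable def stHs (p θ : ℝ) : SolidTorus p θ :=
  RingQuot.mkAlgHom ℂ (SolidTorusRel p θ) (FreeAlgebra.ι ℂ 3)

/-- Integer powers `hⁿ` of the unitary `h` (negative powers via `h⁻¹ = h*`). -/
noncomputable def stHpow (p θ : ℝ) (n : ℤ) : SolidTorus p θ :=
  if 0 ≤ n then stH p θ ^ n.toNat else stHs p θ ^ (-n).toNat

namespace LaurentCoaction

open LaurentPolynomial

variable {R A : Type*} [CommRing R] [Ring A] [Algebra R A]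
    (ρ : A →ₐ[R] A ⊗[R] LaurentPolynomial R)

noncomputable def homogeneous (n : ℤ) : Submodule R A :=
  LinearMap.eqLocus ρ.toLinearMap ((TensorProduct.mk R A (LaurentPolynomial R)).flip (T n))

variable {ρ}

theorem mem_homogeneous {n : ℤ} {a : A} : a ∈ homogeneous ρ n ↔ ρ a = a ⊗ₜ T n := Iff.rfl

theorem one_mem_homogeneous_zero : (1 : A) ∈ homogeneous ρ 0 := by
  rw [mem_homogeneous, map_one, T_zero, Algebra.TensorProduct.one_def]

theorem mul_mem_homogeneous {m n : ℤ} {a b : A} (ha : a ∈ homogeneous ρ m)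
    (hb : b ∈ homogeneous ρ n) : a * b ∈ homogeneous ρ (m + n) := by
  rw [mem_homogeneous] at *
  rw [map_mul, ha, hb, Algebra.TensorProduct.tmul_mul_tmul, T_add]

theorem iSup_homogeneous_eq_top_of_adjoin {s : Set A} (hs : Algebra.adjoin R s = ⊤)
    (hhom : ∀ a ∈ s, ∃ n, a ∈ homogeneous ρ n) : ⨆ n, homogeneous ρ n = ⊤ := by
  set M := ⨆ n, homogeneous ρ n
  have hmul : M * M ≤ M := by
    rw [Submodule.iSup_mul]
    refine iSup_le fun m => ?_
    rw [Submodule.mul_iSup]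
    exact iSup_le fun n => Submodule.mul_le.2 fun a ha b hb =>
      Submodule.mem_iSup_of_mem (m + n) (mul_mem_homogeneous ha hb)
  let S : Subalgebra R A :=
    M.toSubalgebra (Submodule.mem_iSup_of_mem 0 one_mem_homogeneous_zero)
      fun _ _ ha hb => hmul (Submodule.mul_mem_mul ha hb)
  have hS : Algebra.adjoin R s ≤ S := Algebra.adjoin_le fun a ha =>
    let ⟨n, hn⟩ := hhom a ha
    Submodule.mem_iSup_of_mem n hn
  rw [hs] at hS
  exact eq_top_iff.2 fun a _ => hS Algebra.mem_top

theorem val_zpow_mem_homogeneous {u : Aˣ} (hu : (u : A) ∈ homogeneous ρ 1) (n : ℤ) :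
    ((u ^ n : Aˣ) : A) ∈ homogeneous ρ n := by
  have hinv : ((u⁻¹ : Aˣ) : A) ∈ homogeneous ρ (-1) := by
    rw [mem_homogeneous]
    refine left_inv_eq_right_inv (a := ρ u) ?_ ?_
    · rw [← map_mul, Units.inv_mul, map_one]
    · rw [mem_homogeneous.1 hu, Algebra.TensorProduct.tmul_mul_tmul, Units.mul_inv, ← T_add,
        add_neg_cancel, T_zero, Algebra.TensorProduct.one_def]
  induction n using Int.induction_on with
  | zero => simpa only [zpow_zero, Units.val_one] using one_mem_homogeneous_zero
  | succ k ih => simpa only [zpow_add_one, Units.val_mul] using mul_mem_homogeneous ih hu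
  | pred k ih =>
    simpa only [sub_eq_add_neg, zpow_add, zpow_neg_one, Units.val_mul] using
      mul_mem_homogeneous ih hinv

variable (ρ)

noncomputable def balancing : Submodule R (A ⊗[R] A) :=
  Submodule.span R
    {t | ∃ p₁ p₂ b : A, ρ b = b ⊗ₜ[R] 1 ∧ t = (p₁ * b) ⊗ₜ[R] p₂ - p₁ ⊗ₜ[R] (b * p₂)}

noncomputable def can : A ⊗[R] A →ₗ[R] A ⊗[R] LaurentPolynomial R :=
  (LinearMap.rTensor (LaurentPolynomial R) (LinearMap.mul' R A)).comp
    (((TensorProduct.assoc R A A (LaurentPolynomial R)).symm.toLinearMap).comp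
      (LinearMap.lTensor A ρ.toLinearMap))

variable {ρ}

theorem can_tmul (a b : A) : can ρ (a ⊗ₜ b) = (a ⊗ₜ 1) * ρ b := by
  suffices h : ∀ z : A ⊗[R] LaurentPolynomial R,
      LinearMap.rTensor _ (LinearMap.mul' R A) ((TensorProduct.assoc R A A _).symm (a ⊗ₜ z)) =
        (a ⊗ₜ 1) * z from h (ρ b)
  intro z
  induction z using TensorProduct.induction_on with
  | zero => rw [TensorProduct.tmul_zero, map_zero, map_zero, mul_zero]
  | tmul c d =>
    rw [TensorProduct.assoc_symm_tmul, LinearMap.rTensor_tmul, LinearMap.mul'_apply,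
      Algebra.TensorProduct.tmul_mul_tmul, one_mul]
  | add y z hy hz => rw [TensorProduct.tmul_add, map_add, map_add, hy, hz, mul_add]

theorem mk_mul_tmul_eq_mk_tmul_mul {b : A} (hb : b ∈ homogeneous ρ 0) (p₁ p₂ : A) :
    (Submodule.Quotient.mk ((p₁ * b) ⊗ₜ p₂) : A ⊗[R] A ⧸ balancing ρ) =
      Submodule.Quotient.mk (p₁ ⊗ₜ (b * p₂)) := by
  rw [Submodule.Quotient.eq]
  rw [mem_homogeneous, T_zero] at hb
  exact Submodule.subset_span ⟨p₁, p₂, b, hb, rfl⟩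

theorem balancing_le_ker_can : balancing ρ ≤ LinearMap.ker (can ρ) := by
  rw [balancing, Submodule.span_le]
  rintro _ ⟨p₁, p₂, b, hb, rfl⟩
  rw [SetLike.mem_coe, LinearMap.mem_ker, map_sub, can_tmul, can_tmul, map_mul, hb,
    ← mul_assoc, Algebra.TensorProduct.tmul_mul_tmul, one_mul, sub_self]

variable (ρ) (u : Aˣ)

noncomputable def canInv : A ⊗[R] LaurentPolynomial R →ₗ[R] A ⊗[R] A ⧸ balancing ρ :=
  TensorProduct.lift ((AddMonoidAlgebra.basis ℤ R).constr R fun n =>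
    (balancing ρ).mkQ ∘ₗ (TensorProduct.mk R A A).flip ↑(u ^ n) ∘ₗ
      LinearMap.mulRight R ↑(u ^ (-n))).flip

variable {ρ u}

theorem canInv_tmul_T (a : A) (n : ℤ) :
    canInv ρ u (a ⊗ₜ T n) = Submodule.Quotient.mk ((a * ↑(u ^ (-n))) ⊗ₜ ↑(u ^ n)) := by
  have hT : (T n : LaurentPolynomial R) = AddMonoidAlgebra.basis ℤ R n := rfl
  rw [canInv, hT, TensorProduct.lift.tmul, LinearMap.flip_apply, Module.Basis.constr_basis]
  rfl

theorem liftQ_can_canInv (hu : (u : A) ∈ homogeneous ρ 1) (z : A ⊗[R] LaurentPolynomial R) :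
    (balancing ρ).liftQ (can ρ) balancing_le_ker_can (canInv ρ u z) = z := by
  induction z using TensorProduct.induction_on with
  | zero => rw [map_zero, map_zero]
  | add y z hy hz => rw [map_add, map_add, hy, hz]
  | tmul a c =>
    induction c using LaurentPolynomial.induction_on' with
    | add c d hc hd => rw [TensorProduct.tmul_add, map_add, map_add, hc, hd]
    | C_mul_T n r =>
      rw [← smul_eq_C_mul, TensorProduct.tmul_smul, map_smul, map_smul, canInv_tmul_T,
        Submodule.liftQ_apply, can_tmul, mem_homogeneous.1 (val_zpow_mem_homogeneous hu n),
        Algebra.TensorProduct.tmul_mul_tmul, one_mul, mul_assoc, ← Units.val_mul, ← zpow_add,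
        neg_add_cancel, zpow_zero, Units.val_one, mul_one]

theorem canInv_can_tmul_of_mem_homogeneous (hu : (u : A) ∈ homogeneous ρ 1) {n : ℤ} (a : A)
    {b : A} (hb : b ∈ homogeneous ρ n) :
    canInv ρ u (can ρ (a ⊗ₜ b)) = Submodule.Quotient.mk (a ⊗ₜ b) := by
  have hbu : b * ↑(u ^ (-n)) ∈ homogeneous ρ 0 := by
    simpa only [add_neg_cancel] using mul_mem_homogeneous hb (val_zpow_mem_homogeneous hu (-n))
  rw [can_tmul, mem_homogeneous.1 hb, Algebra.TensorProduct.tmul_mul_tmul, one_mul,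
    canInv_tmul_T, mul_assoc, mk_mul_tmul_eq_mk_tmul_mul hbu, mul_assoc, ← Units.val_mul,
    ← zpow_add, neg_add_cancel, zpow_zero, Units.val_one, mul_one]

theorem canInv_can (hu : (u : A) ∈ homogeneous ρ 1) (hρ : ⨆ n, homogeneous ρ n = ⊤)
    (t : A ⊗[R] A) : canInv ρ u (can ρ t) = Submodule.Quotient.mk t := by
  induction t using TensorProduct.induction_on with
  | zero => rw [map_zero, map_zero, Submodule.Quotient.mk_zero]
  | add s t hs ht => rw [map_add, map_add, hs, ht, Submodule.Quotient.mk_add]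
  | tmul a b =>
    have hb : b ∈ ⨆ n, homogeneous ρ n := hρ ▸ Submodule.mem_top
    induction hb using Submodule.iSup_induction' with
    | mem n b hb => exact canInv_can_tmul_of_mem_homogeneous hu a hb
    | zero => rw [TensorProduct.tmul_zero, map_zero, map_zero, Submodule.Quotient.mk_zero]
    | add b c _ _ hb hc =>
      rw [TensorProduct.tmul_add, map_add, map_add, hb, hc, Submodule.Quotient.mk_add]

theorem bijective_liftQ_can (hu : (u : A) ∈ homogeneous ρ 1) (hρ : ⨆ n, homogeneous ρ n = ⊤) :
    Function.Bijective ((balancing ρ).liftQ (can ρ) balancing_le_ker_can) := by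
  refine Function.bijective_iff_has_inverse.2 ⟨canInv ρ u, fun x => ?_, liftQ_can_canInv hu⟩
  induction x using Submodule.Quotient.induction_on with
  | H t => rw [Submodule.liftQ_apply, canInv_can hu hρ]

end LaurentCoaction

theorem RingQuot.adjoin_range_mkAlgHom_comp_ι {R X : Type*} [CommSemiring R]
    (r : FreeAlgebra R X → FreeAlgebra R X → Prop) :
    Algebra.adjoin R (Set.range (RingQuot.mkAlgHom R r ∘ FreeAlgebra.ι R)) = ⊤ := by
  rw [Set.range_comp, Algebra.adjoin_image, FreeAlgebra.adjoin_range_ι, Algebra.map_top,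
    AlgHom.range_eq_top]
  exact RingQuot.mkAlgHom_surjective R r

namespace SolidTorus

open LaurentCoaction LaurentPolynomial

variable {p θ : ℝ}

theorem stH_mul_stHs : stH p θ * stHs p θ = 1 := by
  have h := RingQuot.mkAlgHom_rel ℂ (SolidTorusRel.h_hs (p := p) (θ := θ))
  rwa [map_mul, map_one] at h

theorem stHs_mul_stH : stHs p θ * stH p θ = 1 := by
  have h := RingQuot.mkAlgHom_rel ℂ (SolidTorusRel.hs_h (p := p) (θ := θ))
  rwa [map_mul, map_one] at h

variable (p θ) in
noncomputable def stHUnit : (SolidTorus p θ)ˣ := ⟨stH p θ, stHs p θ, stH_mul_stHs, stHs_mul_stH⟩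

theorem stHpow_eq_val_zpow (n : ℤ) : stHpow p θ n = ↑(stHUnit p θ ^ n) := by
  unfold stHpow
  split_ifs with hn
  · lift n to ℕ using hn
    rw [Int.toNat_natCast, zpow_natCast, Units.val_pow_eq_pow_val]
    rfl
  · obtain ⟨k, rfl⟩ : ∃ k : ℕ, n = -k := ⟨(-n).toNat, by omega⟩
    rw [neg_neg, Int.toNat_natCast, zpow_neg, zpow_natCast, ← inv_pow, Units.val_pow_eq_pow_val]
    rfl

theorem stHpow_add (m n : ℤ) : stHpow p θ (m + n) = stHpow p θ m * stHpow p θ n := by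
  rw [stHpow_eq_val_zpow, stHpow_eq_val_zpow, stHpow_eq_val_zpow, zpow_add, Units.val_mul]

theorem stHpow_zero : stHpow p θ 0 = 1 := by
  rw [stHpow_eq_val_zpow, zpow_zero, Units.val_one]

theorem iSup_homogeneous_eq_top
    (ρ : SolidTorus p θ →ₐ[ℂ] SolidTorus p θ ⊗[ℂ] LaurentPolynomial ℂ)
    (hx : ρ (stX p θ) = stX p θ ⊗ₜ[ℂ] 1) (hxs : ρ (stXs p θ) = stXs p θ ⊗ₜ[ℂ] 1)
    (hh : ρ (stH p θ) = stH p θ ⊗ₜ[ℂ] T 1) : ⨆ n, homogeneous ρ n = ⊤ := by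
  have hx₀ : stX p θ ∈ homogeneous ρ 0 := by rwa [mem_homogeneous, T_zero]
  have hxs₀ : stXs p θ ∈ homogeneous ρ 0 := by rwa [mem_homogeneous, T_zero]
  have hhs : stHs p θ ∈ homogeneous ρ (-1) := by
    have h := val_zpow_mem_homogeneous (u := stHUnit p θ) hh (-1)
    rwa [zpow_neg_one] at h
  refine iSup_homogeneous_eq_top_of_adjoin (RingQuot.adjoin_range_mkAlgHom_comp_ι _) ?_
  rintro _ ⟨i, rfl⟩
  fin_cases i
  exacts [⟨0, hx₀⟩, ⟨0, hxs₀⟩, ⟨1, hh⟩, ⟨-1, hhs⟩]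

end SolidTorus

theorem solidTorus_cleft_general (p θ : ℝ)
    (ρ : SolidTorus p θ →ₐ[ℂ] SolidTorus p θ ⊗[ℂ] LaurentPolynomial ℂ)
    (hx : ρ (stX p θ) = stX p θ ⊗ₜ[ℂ] 1)
    (hxs : ρ (stXs p θ) = stXs p θ ⊗ₜ[ℂ] 1)
    (hh : ρ (stH p θ) = stH p θ ⊗ₜ[ℂ] LaurentPolynomial.T 1)
    (γ γ' : LaurentPolynomial ℂ →ₗ[ℂ] SolidTorus p θ)
    (hγ : ∀ n : ℤ, γ (LaurentPolynomial.T n) = stHpow p θ n)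
    (hγ' : ∀ n : ℤ, γ' (LaurentPolynomial.T n) = stHpow p θ (-n)) :
    -- `γ` is right `H`-colinear (on the grouplike basis `uⁿ`)
    (∀ n : ℤ, ρ (γ (LaurentPolynomial.T n)) =
      γ (LaurentPolynomial.T n) ⊗ₜ[ℂ] LaurentPolynomial.T n) ∧
    -- `γ'` is the convolution inverse of `γ`
    (∀ n : ℤ, γ (LaurentPolynomial.T n) * γ' (LaurentPolynomial.T n) = 1 ∧
      γ' (LaurentPolynomial.T n) * γ (LaurentPolynomial.T n) = 1) ∧
    -- the canonical map is well defined on `P ⊗_B P` and bijective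
    (∃ hker : Submodule.span ℂ
        {t : SolidTorus p θ ⊗[ℂ] SolidTorus p θ |
          ∃ p₁ p₂ b : SolidTorus p θ, ρ b = b ⊗ₜ[ℂ] 1 ∧
            t = (p₁ * b) ⊗ₜ[ℂ] p₂ - p₁ ⊗ₜ[ℂ] (b * p₂)} ≤
        LinearMap.ker
          ((LinearMap.rTensor (LaurentPolynomial ℂ)
              (LinearMap.mul' ℂ (SolidTorus p θ))).comp
            (((TensorProduct.assoc ℂ (SolidTorus p θ) (SolidTorus p θ)
                (LaurentPolynomial ℂ)).symm.toLinearMap).comp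
              (LinearMap.lTensor (SolidTorus p θ) ρ.toLinearMap))),
      Function.Bijective (Submodule.liftQ _
        ((LinearMap.rTensor (LaurentPolynomial ℂ)
            (LinearMap.mul' ℂ (SolidTorus p θ))).comp
          (((TensorProduct.assoc ℂ (SolidTorus p θ) (SolidTorus p θ)
              (LaurentPolynomial ℂ)).symm.toLinearMap).comp
            (LinearMap.lTensor (SolidTorus p θ) ρ.toLinearMap))) hker)) := by
  have hu : (SolidTorus.stHUnit p θ : SolidTorus p θ) ∈ LaurentCoaction.homogeneous ρ 1 := hh
  refine ⟨fun n => ?_, fun n => ?_, LaurentCoaction.balancing_le_ker_can,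
    LaurentCoaction.bijective_liftQ_can hu (SolidTorus.iSup_homogeneous_eq_top ρ hx hxs hh)⟩
  · rw [hγ, SolidTorus.stHpow_eq_val_zpow]
    exact LaurentCoaction.val_zpow_mem_homogeneous hu n
  · rw [hγ, hγ', ← SolidTorus.stHpow_add, ← SolidTorus.stHpow_add, add_neg_cancel,
      neg_add_cancel, SolidTorus.stHpow_zero]
    exact ⟨rfl, rfl⟩

/-- For the quantum solid torus `P = O(D_p ×_θ S¹)` with `H = ℂ[u,u⁻¹]`-coaction
`ρ(x) = x⊗1`, `ρ(h) = h⊗u`, the map `γ : uⁿ ↦ hⁿ` is a cleaving map: it is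
right `H`-colinear, convolution invertible with inverse `uⁿ ↦ h⁻ⁿ`, and the
canonical map `can : P ⊗_B P → P ⊗ H` (on `P ⊗_B P` realized as the quotient of
`P ⊗ P` by the `B`-balancing relations, `B = P^{co H}`) is bijective. -/
theorem solidTorus_cleft (p θ : ℝ) (hp0 : 0 < p) (hp1 : p < 1)
    (ρ : SolidTorus p θ →ₐ[ℂ] SolidTorus p θ ⊗[ℂ] LaurentPolynomial ℂ)
    (hx : ρ (stX p θ) = stX p θ ⊗ₜ[ℂ] 1)
    (hxs : ρ (stXs p θ) = stXs p θ ⊗ₜ[ℂ] 1)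
    (hh : ρ (stH p θ) = stH p θ ⊗ₜ[ℂ] LaurentPolynomial.T 1)
    (hhs : ρ (stHs p θ) = stHs p θ ⊗ₜ[ℂ] LaurentPolynomial.T (-1))
    (γ γ' : LaurentPolynomial ℂ →ₗ[ℂ] SolidTorus p θ)
    (hγ : ∀ n : ℤ, γ (LaurentPolynomial.T n) = stHpow p θ n)
    (hγ' : ∀ n : ℤ, γ' (LaurentPolynomial.T n) = stHpow p θ (-n)) :
    -- `γ` is right `H`-colinear (on the grouplike basis `uⁿ`)
    (∀ n : ℤ, ρ (γ (LaurentPolynomial.T n)) =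
      γ (LaurentPolynomial.T n) ⊗ₜ[ℂ] LaurentPolynomial.T n) ∧
    -- `γ'` is the convolution inverse of `γ`
    (∀ n : ℤ, γ (LaurentPolynomial.T n) * γ' (LaurentPolynomial.T n) = 1 ∧
      γ' (LaurentPolynomial.T n) * γ (LaurentPolynomial.T n) = 1) ∧
    -- the canonical map is well defined on `P ⊗_B P` and bijective
    (∃ hker : Submodule.span ℂ
        {t : SolidTorus p θ ⊗[ℂ] SolidTorus p θ |
          ∃ p₁ p₂ b : SolidTorus p θ, ρ b = b ⊗ₜ[ℂ] 1 ∧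
            t = (p₁ * b) ⊗ₜ[ℂ] p₂ - p₁ ⊗ₜ[ℂ] (b * p₂)} ≤
        LinearMap.ker
          ((LinearMap.rTensor (LaurentPolynomial ℂ)
              (LinearMap.mul' ℂ (SolidTorus p θ))).comp
            (((TensorProduct.assoc ℂ (SolidTorus p θ) (SolidTorus p θ)
                (LaurentPolynomial ℂ)).symm.toLinearMap).comp
              (LinearMap.lTensor (SolidTorus p θ) ρ.toLinearMap))),
      Function.Bijective (Submodule.liftQ _
        ((LinearMap.rTensor (LaurentPolynomial ℂ)
            (LinearMap.mul' ℂ (SolidTorus p θ))).comp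
          (((TensorProduct.assoc ℂ (SolidTorus p θ) (SolidTorus p θ)
              (LaurentPolynomial ℂ)).symm.toLinearMap).comp
            (LinearMap.lTensor (SolidTorus p θ) ρ.toLinearMap))) hker)) :=
  solidTorus_cleft_general p θ ρ hx hxs hh γ γ' hγ hγ'
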